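/- Extension-variable lemma: let Γ be a MaxSAT instance containing a clause C ∨ b, where b is a blocking variable and this clause is the unique occurrence of b in Γ, and write C = ℓ₁ ∨ … ∨ ℓ_t. Then there is a cost-LPR derivation from Γ containing all the clauses ¬ℓᵢ ∨ ¬b for i ∈ [t] (thereby turning b into an extension variable satisfying b ↔ ¬C). -/

import Mathlib

namespace PaperMaxSAT

/-- Variables are natural numbers. -/
abbrev Var := ℕ

/-- A literal is a variable together with a polarity. -/
abbrev Lit := Var × Bool

/-- Negation of a literal. -/
def negLit (l : Lit) : Lit := (l.1, !l.2)

/-- A clause is a finite set of literals. -/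
abbrev Clause := Finset Lit

/-- A CNF formula is a finite multiset of clauses. -/
abbrev CNF := Multiset Clause

/-- A tautological clause contains a literal together with its negation. -/
def isTaut (C : Clause) : Prop := ∃ l ∈ C, negLit l ∈ C

/-- The value of a substitution at a variable: a Boolean constant or a literal. -/
abbrev SubVal := Bool ⊕ Lit

/-- Negation on substitution values. -/
def negSV : SubVal → SubVal
  | .inl b => .inl !b
  | .inr l => .inr (negLit l)

/-- A substitution maps each variable to `0`, `1` or a literal. -/
abbrev Sub := Var → SubVal

/-- Applying a substitution to a literal, respecting `σ(¬x) = ¬σ(x)`. -/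
def appLit (σ : Sub) (l : Lit) : SubVal :=
  if l.2 then σ l.1 else negSV (σ l.1)

/-- The identity substitution. -/
def idSub : Sub := fun v => .inr (v, true)

/-- `σ(C) = 1` : some literal of `C` is mapped to true by `σ`. -/
def clauseTrue (σ : Sub) (C : Clause) : Prop := ∃ l ∈ C, appLit σ l = Sum.inl true

instance (σ : Sub) (C : Clause) : Decidable (clauseTrue σ C) := by
  unfold clauseTrue; infer_instance

/-- `C↾σ` : the clause whose literals are the images under `σ` of the literals
of `C` mapped to literals (literals mapped to `0` are dropped). -/
def restrictClause (σ : Sub) (C : Clause) : Clause :=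
  C.biUnion (fun l => match appLit σ l with
    | .inr m => {m}
    | _ => (∅ : Clause))

/-- `Γ↾σ` : restrict every clause of `Γ`; clauses mapped to `1` are removed. -/
def restrictCNF (σ : Sub) (Γ : CNF) : CNF :=
  (Γ.filter (fun C => ¬ clauseTrue σ C)).map (restrictClause σ)

/-- `σ ⊨ C` : `σ(C) = 1` or `σ(C)` is tautological. -/
def subSat (σ : Sub) (C : Clause) : Prop :=
  clauseTrue σ C ∨ isTaut (restrictClause σ C)

/-- The assignment `¬C`, setting all literals of `C` to false. -/
def negSub (C : Clause) : Sub := fun v =>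
  if (v, true) ∈ C then .inl false
  else if (v, false) ∈ C then .inl true
  else .inr (v, true)

/-- The substitution setting the literal `l` to true and touching nothing else. -/
def litSub (l : Lit) : Sub := fun v => if v = l.1 then .inl l.2 else .inr (v, true)

/-- Unit propagation derives the empty clause. -/
inductive UPFalse : CNF → Prop
  | empty {Γ : CNF} : (∅ : Clause) ∈ Γ → UPFalse Γ
  | step {Γ : CNF} (l : Lit) : ({l} : Clause) ∈ Γ →
      UPFalse (restrictCNF (litSub l) Γ) → UPFalse Γ

/-- The unit clauses `¬l` for `l ∈ C`. -/
def negUnits (C : Clause) : CNF := C.val.map (fun l => ({negLit l} : Clause))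

/-- `Γ ⊢₁ C` : unit propagation on `Γ↾¬C` produces the empty clause. -/
def UPimplies (Γ : CNF) (C : Clause) : Prop := UPFalse (Γ + negUnits C)

/-- `Γ ⊢₁ Δ` : `Γ ⊢₁ D` for every `D ∈ Δ`. -/
def UPimpliesAll (Γ Δ : CNF) : Prop := ∀ D ∈ Δ, UPimplies Γ D

/-- Total assignments. -/
abbrev TAssign := Var → Bool

/-- A total assignment satisfies a clause. -/
def satC (α : TAssign) (C : Clause) : Prop := ∃ l ∈ C, α l.1 = l.2

instance (α : TAssign) (C : Clause) : Decidable (satC α C) := by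
  unfold satC; infer_instance

/-- A total assignment satisfies a CNF. -/
def satCNF (α : TAssign) (Γ : CNF) : Prop := ∀ C ∈ Γ, satC α C

/-- `τ ∘ σ` : composition of a total assignment with a substitution. -/
def comp (τ : TAssign) (σ : Sub) : TAssign := fun v =>
  match σ v with
  | .inl b => b
  | .inr l => if l.2 then τ l.1 else !(τ l.1)

/-- `τ` extends the assignment `¬C`. -/
def extendsNeg (τ : TAssign) (C : Clause) : Prop := ∀ l ∈ C, τ l.1 = !l.2

/-- The cost of a total assignment w.r.t. a set `B` of blocking variables:
the number of blocking variables set to true. -/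
def cost (B : Finset Var) (α : TAssign) : ℕ := (B.filter (fun b => α b = true)).card

/-- The cost of a MaxSAT instance encoded with blocking variables `B`:
the minimum cost of a satisfying total assignment. -/
noncomputable def costCNF (B : Finset Var) (Γ : CNF) : ℕ :=
  sInf {k | ∃ α : TAssign, satCNF α Γ ∧ cost B α = k}

/-- `σ` witnesses that `C` is cost-SR w.r.t. `Γ` (with blocking variables `B`):
the redundancy condition `Γ↾¬C ⊢₁ (Γ ∪ {C})↾σ` and the cost condition. -/
def CostSRwit (B : Finset Var) (Γ : CNF) (C : Clause) (σ : Sub) : Prop :=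
  UPimpliesAll (restrictCNF (negSub C) Γ) (restrictCNF σ (C ::ₘ Γ)) ∧
  ∀ τ : TAssign, extendsNeg τ C → cost B (comp τ σ) ≤ cost B τ

/-- `C` is cost-SR w.r.t. `Γ`. -/
def CostSR (B : Finset Var) (Γ : CNF) (C : Clause) : Prop := ∃ σ, CostSRwit B Γ C σ

/-- A substitution which is an assignment: every value is `0`, `1`,
or the variable itself. -/
def isAssign (σ : Sub) : Prop :=
  ∀ v, σ v = .inl true ∨ σ v = .inl false ∨ σ v = .inr (v, true)

/-- The variables of a clause. -/
def varsClause (C : Clause) : Finset Var := C.image Prod.fst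

/-- The variables of a CNF. -/
def varsCNF (Γ : CNF) : Finset Var := (Γ.map varsClause).sup

/-- Membership in the domain of an assignment. -/
def subDom (σ : Sub) (v : Var) : Prop := ∃ b : Bool, σ v = .inl b

/-- `C` is cost-PR w.r.t. `Γ`: cost-SR witnessed by an assignment. -/
def CostPR (B : Finset Var) (Γ : CNF) (C : Clause) : Prop :=
  ∃ σ, CostSRwit B Γ C σ ∧ isAssign σ

/-- `C` is cost-SPR w.r.t. `Γ`: cost-SR witnessed by an assignment with
domain `dom(¬C) = Var(C)`. -/
def CostSPR (B : Finset Var) (Γ : CNF) (C : Clause) : Prop :=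
  ∃ σ, CostSRwit B Γ C σ ∧ isAssign σ ∧ (∀ v, subDom σ v ↔ v ∈ varsClause C)

/-- `C` is cost-LPR w.r.t. `Γ`: cost-SR witnessed by an assignment with
domain `dom(¬C)` differing from `¬C` on exactly one variable. -/
def CostLPR (B : Finset Var) (Γ : CNF) (C : Clause) : Prop :=
  ∃ σ, CostSRwit B Γ C σ ∧ isAssign σ ∧ (∀ v, subDom σ v ↔ v ∈ varsClause C) ∧
    ((varsClause C).filter (fun v => σ v ≠ negSub C v)).card = 1

/-- `D` is a resolvent of `E₁` and `E₂`. -/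
def resolvent (D E₁ E₂ : Clause) : Prop :=
  ∃ x : Var, (x, true) ∈ E₁ ∧ (x, false) ∈ E₂ ∧
    D = E₁.erase (x, true) ∪ E₂.erase (x, false)

/-- A derivation from `Γ` in the calculus with redundancy rule `Red`:
every clause of the list is in `Γ`, a weakening of an earlier clause,
a resolvent of two earlier clauses, or redundant (w.r.t. `Red`) relative to
`Γ` together with the earlier clauses, using no new variables. -/
def IsDeriv (Red : Finset Var → CNF → Clause → Prop) (B : Finset Var) (Γ : CNF)
    (L : List Clause) : Prop :=
  ∀ i, ∀ hi : i < L.length,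
    L[i] ∈ Γ ∨
    (∃ j, ∃ hj : j < i, L[j]'(hj.trans hi) ⊆ L[i]) ∨
    (∃ j k, ∃ hj : j < i, ∃ hk : k < i,
      resolvent L[i] (L[j]'(hj.trans hi)) (L[k]'(hk.trans hi))) ∨
    (Red B (Γ + (↑(L.take i) : CNF)) L[i] ∧ varsClause L[i] ⊆ varsCNF Γ)

/-- `C ∨ ℓ` is a cost blocked clause (cost-BC) w.r.t. `Γ` and `ℓ`. -/
def CostBC (B : Finset Var) (Γ : CNF) (C : Clause) (l : Lit) : Prop :=
  (∀ D ∈ Γ, negLit l ∈ D → isTaut (C ∪ D.erase (negLit l))) ∧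
  ¬(l.2 = true ∧ l.1 ∈ B)

/-- Hamming distance between two total assignments, over the variables in `V`. -/
def HD (V : Finset Var) (α β : TAssign) : ℕ := (V.filter (fun v => α v ≠ β v)).card

/-- `flip(C, σ) ≥ d` : some total assignment `τ` extending `¬C` has
Hamming distance (over `V`) at least `d` from `τ ∘ σ`. -/
def flipGE (V : Finset Var) (C : Clause) (σ : Sub) (d : ℕ) : Prop :=
  ∃ τ : TAssign, extendsNeg τ C ∧ d ≤ HD V τ (comp τ σ)

/-!
Each clause `¬ℓ ∨ ¬b` is cost-LPR, witnessed by `¬(¬ℓ ∨ ¬b)` with `b` flipped to `0`. Setting `b`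
to `0` never raises the cost. The witness satisfies `C ∨ b` through `ℓ`, and the new clause and
all earlier ones through `¬b`; every other clause avoids `b`, so the witness agrees with
`¬(¬ℓ ∨ ¬b)` on it and its restriction already lies in `Γ↾¬(¬ℓ ∨ ¬b)`, from which unit
propagation trivially derives it.
-/

lemma negLit_negLit (l : Lit) : negLit (negLit l) = l := by
  simp [negLit]

lemma negLit_inj {l m : Lit} : negLit l = negLit m ↔ l = m := by
  simp [negLit, Prod.ext_iff]

lemma negLit_ne_self (l : Lit) : negLit l ≠ l := by
  simp [negLit, Prod.ext_iff]

lemma mem_varsClause {v : Var} {C : Clause} : v ∈ varsClause C ↔ ∃ p, (v, p) ∈ C := by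
  simp [varsClause]

lemma varsClause_subset_varsCNF {Γ : CNF} {C : Clause} (hC : C ∈ Γ) :
    varsClause C ⊆ varsCNF Γ :=
  Multiset.le_sup (Multiset.mem_map_of_mem _ hC)

lemma mem_restrictCNF {σ : Sub} {Γ : CNF} {X : Clause} :
    X ∈ restrictCNF σ Γ ↔ ∃ E ∈ Γ, ¬clauseTrue σ E ∧ restrictClause σ E = X := by
  simp [restrictCNF, and_assoc]

lemma restrictClause_congr {σ σ' : Sub} {E : Clause}
    (h : ∀ m ∈ E, appLit σ m = appLit σ' m) :
    restrictClause σ E = restrictClause σ' E :=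
  Finset.biUnion_congr rfl fun m hm => by rw [h m hm]

lemma clauseTrue_congr {σ σ' : Sub} {E : Clause}
    (h : ∀ m ∈ E, appLit σ m = appLit σ' m) :
    clauseTrue σ E ↔ clauseTrue σ' E :=
  exists_congr fun m => and_congr_right fun hm => by rw [h m hm]

lemma appLit_litSub_negLit {l m : Lit} (hm : m ≠ negLit l) :
    appLit (litSub (negLit l)) m = if m = l then .inl false else .inr m := by
  obtain ⟨v, p⟩ := m
  obtain ⟨w, q⟩ := l
  by_cases hvw : v = w
  · subst hvw
    cases p <;> cases q <;> simp_all [appLit, litSub, negLit, negSV]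
  · have hne : (v, p) ≠ (w, q) := fun h => hvw (congrArg Prod.fst h)
    cases p <;> simp [appLit, litSub, negLit, negSV, hvw, hne]

lemma erase_mem_restrictCNF_litSub_negLit {Γ : CNF} {E : Clause} {l : Lit}
    (hE : E ∈ Γ) (hlE : negLit l ∉ E) :
    E.erase l ∈ restrictCNF (litSub (negLit l)) Γ := by
  have happ : ∀ m ∈ E, appLit (litSub (negLit l)) m = if m = l then .inl false else .inr m :=
    fun m hm => appLit_litSub_negLit (ne_of_mem_of_not_mem hm hlE)
  refine mem_restrictCNF.2 ⟨E, hE, ?_, ?_⟩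
  · rintro ⟨m, hm, hm'⟩
    rw [happ m hm] at hm'
    split_ifs at hm'
    cases hm'
  · ext x
    simp only [restrictClause, Finset.mem_biUnion, Finset.mem_erase]
    constructor
    · rintro ⟨m, hm, hx⟩
      rw [happ m hm] at hx
      split_ifs at hx with hml
      · simp at hx
      · obtain rfl := Finset.mem_singleton.1 hx
        exact ⟨hml, hm⟩
    · rintro ⟨hxl, hx⟩
      exact ⟨x, hx, by simp [happ x hx, hxl]⟩

lemma UPFalse.of_mem_of_negUnits (D : Clause) :
    ∀ Γ : CNF, D ∈ Γ → (∀ m ∈ D, ({negLit m} : Clause) ∈ Γ) → UPFalse Γ := by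
  induction D using Finset.strongInduction with
  | _ D ih =>
    intro Γ hD hunits
    obtain rfl | ⟨l, hl⟩ := D.eq_empty_or_nonempty
    · exact .empty hD
    refine .step (negLit l) (hunits l hl) ?_
    by_cases htaut : negLit l ∈ D
    · have hunit_l : ({l} : Clause) ∈ Γ := by simpa [negLit_negLit] using hunits _ htaut
      have h := erase_mem_restrictCNF_litSub_negLit hunit_l
        (Finset.notMem_singleton.2 (negLit_ne_self l))
      rw [Finset.erase_singleton] at h
      exact .empty h
    · refine ih _ (Finset.erase_ssubset hl) _ (erase_mem_restrictCNF_litSub_negLit hD htaut)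
        fun m hm => ?_
      obtain ⟨hml, hmD⟩ := Finset.mem_erase.1 hm
      have hunit := erase_mem_restrictCNF_litSub_negLit (l := l) (hunits m hmD)
        (Finset.notMem_singleton.2 (negLit_inj.not.2 (Ne.symm hml)))
      rwa [Finset.erase_eq_of_notMem] at hunit
      intro h
      rw [Finset.mem_singleton] at h
      exact htaut (by rw [h, negLit_negLit]; exact hmD)

lemma UPimplies.of_mem {Γ : CNF} {D : Clause} (h : D ∈ Γ) : UPimplies Γ D :=
  UPFalse.of_mem_of_negUnits D _ (Multiset.mem_add.2 (.inl h))
    fun _ hm => Multiset.mem_add.2 (.inr (Multiset.mem_map_of_mem _ hm))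

lemma UPimpliesAll.restrictCNF_of_forall {Γ Δ : CNF} {σ ρ : Sub}
    (h : ∀ E ∈ Δ, clauseTrue σ E ∨ (E ∈ Γ ∧ ∀ m ∈ E, appLit σ m = appLit ρ m)) :
    UPimpliesAll (restrictCNF ρ Γ) (restrictCNF σ Δ) := by
  intro X hX
  obtain ⟨E, hE, hnt, rfl⟩ := mem_restrictCNF.1 hX
  rcases h E hE with htrue | ⟨hEΓ, hagree⟩
  · exact absurd htrue hnt
  · rw [restrictClause_congr hagree]
    exact UPimplies.of_mem
      (mem_restrictCNF.2 ⟨E, hEΓ, (clauseTrue_congr hagree).not.1 hnt, rfl⟩)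

section FlipSub

def flipSub (D : Clause) (k : Lit) : Sub := Function.update (negSub D) k.1 (.inl k.2)

variable {D : Clause} {k : Lit}

lemma negSub_of_notMem_varsClause {v : Var} (hv : v ∉ varsClause D) :
    negSub D v = .inr (v, true) := by
  simp only [mem_varsClause, not_exists] at hv
  simp [negSub, hv]

lemma isAssign_flipSub : isAssign (flipSub D k) := by
  intro v
  unfold flipSub Function.update negSub
  split_ifs <;> simp_all

lemma subDom_flipSub_iff (hk : k ∈ D) (v : Var) : subDom (flipSub D k) v ↔ v ∈ varsClause D := by
  by_cases hvk : v = k.1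
  · subst hvk
    simpa [flipSub, subDom] using mem_varsClause.2 ⟨k.2, hk⟩
  · simp only [subDom, flipSub, Function.update_of_ne hvk]
    constructor
    · rintro ⟨c, hc⟩
      by_contra hv
      simp [negSub_of_notMem_varsClause hv] at hc
    · intro hv
      obtain ⟨p, hp⟩ := mem_varsClause.1 hv
      unfold negSub
      cases p <;> split_ifs <;> simp_all

lemma filter_flipSub_ne_negSub (hk : k ∈ D) (hkD : negLit k ∉ D) :
    (varsClause D).filter (fun v => flipSub D k v ≠ negSub D v) = {k.1} := by
  ext v
  simp only [Finset.mem_filter, Finset.mem_singleton]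
  constructor
  · rintro ⟨-, hne⟩
    by_contra hvk
    exact hne (Function.update_of_ne hvk _ _)
  · rintro rfl
    refine ⟨mem_varsClause.2 ⟨k.2, hk⟩, ?_⟩
    obtain ⟨v, p⟩ := k
    cases p <;> simp_all [flipSub, negSub, negLit]

lemma CostSRwit.costLPR {B : Finset Var} {Γ : CNF} (hk : k ∈ D) (hkD : negLit k ∉ D)
    (h : CostSRwit B Γ D (flipSub D k)) : CostLPR B Γ D :=
  ⟨flipSub D k, h, isAssign_flipSub, subDom_flipSub_iff hk,
    by rw [filter_flipSub_ne_negSub hk hkD, Finset.card_singleton]⟩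

lemma comp_flipSub {τ : TAssign} (hτ : extendsNeg τ D) :
    comp τ (flipSub D k) = Function.update τ k.1 k.2 := by
  funext v
  by_cases hvk : v = k.1
  · subst hvk
    simp [comp, flipSub]
  · simp only [comp, flipSub, Function.update_of_ne hvk]
    unfold negSub
    split_ifs with h₁ h₂
    · simpa using (hτ _ h₁).symm
    · simpa using (hτ _ h₂).symm
    · rfl

lemma appLit_flipSub_self : appLit (flipSub D k) k = .inl true := by
  obtain ⟨v, p⟩ := k
  cases p <;> simp [appLit, flipSub, negSV]

lemma appLit_flipSub_of_fst_ne {m : Lit} (hm : m.1 ≠ k.1) :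
    appLit (flipSub D k) m = appLit (negSub D) m := by
  simp [appLit, flipSub, Function.update_of_ne hm]

lemma appLit_negSub_of_negLit_mem {l : Lit} (hl : negLit l ∈ D) (hlD : l ∉ D) :
    appLit (negSub D) l = .inl true := by
  obtain ⟨v, p⟩ := l
  cases p <;> simp_all [appLit, negSub, negLit, negSV]

end FlipSub

lemma cost_update_false_le (B : Finset Var) (τ : TAssign) (v : Var) :
    cost B (Function.update τ v false) ≤ cost B τ := by
  refine Finset.card_le_card (Finset.monotone_filter_right _ fun w _ hw => ?_)
  by_cases hwv : w = v
  · subst hwv; simp at hw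
  · rwa [Function.update_of_ne hwv] at hw

theorem costLPR_negLit_or_neg {B : Finset Var} {Γ : CNF} {l : Lit} {b : Var} (hlb : l.1 ≠ b)
    (hΓ : ∀ E ∈ Γ, b ∈ varsClause E → l ∈ E ∨ ((b, false) : Lit) ∈ E) :
    CostLPR B Γ {negLit l, (b, false)} := by
  set D : Clause := {negLit l, (b, false)}
  have hbD : ((b, false) : Lit) ∈ D := by simp [D]
  have hbD' : negLit ((b, false) : Lit) ∉ D := by
    simp [D, negLit, Prod.ext_iff, Ne.symm hlb]
  have hlD : l ∉ D := by
    simp [D, Prod.ext_iff, hlb, (negLit_ne_self l).symm]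
  have hl : appLit (flipSub D (b, false)) l = .inl true := by
    rw [appLit_flipSub_of_fst_ne hlb, appLit_negSub_of_negLit_mem (by simp [D]) hlD]
  refine CostSRwit.costLPR hbD hbD' ⟨UPimpliesAll.restrictCNF_of_forall fun E hE => ?_,
    fun τ hτ => (comp_flipSub hτ).symm ▸ cost_update_false_le B τ b⟩
  by_cases hbE : b ∈ varsClause E
  · left
    rcases Multiset.mem_cons.1 hE with rfl | hEΓ
    · exact ⟨_, hbD, appLit_flipSub_self⟩
    rcases hΓ E hEΓ hbE with hlE | hbE'
    · exact ⟨l, hlE, hl⟩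
    · exact ⟨_, hbE', appLit_flipSub_self⟩
  · right
    refine ⟨(Multiset.mem_cons.1 hE).resolve_left ?_, fun m hm => appLit_flipSub_of_fst_ne ?_⟩
    · rintro rfl
      exact hbE (mem_varsClause.2 ⟨false, hbD⟩)
    · intro hmb
      exact hbE (mem_varsClause.2 ⟨m.2, by rw [← show m.1 = b from hmb]; exact hm⟩)

theorem extension_variable_lemma_general (B : Finset Var) (Γ : CNF) (C : Clause)
    (b : Var) (hbC : b ∉ varsClause C)
    (hmem : insert ((b, true) : Lit) C ∈ Γ)
    (huniq : ∀ D ∈ Γ, b ∈ varsClause D → D = insert ((b, true) : Lit) C) :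
    ∃ L : List Clause, IsDeriv CostLPR B Γ L ∧
      ∀ l ∈ C, ({negLit l, ((b, false) : Lit)} : Clause) ∈ L := by
  set L := C.toList.map fun l => ({negLit l, ((b, false) : Lit)} : Clause)
  refine ⟨L, fun i hi => .inr (.inr (.inr ?_)),
    fun l hl => List.mem_map.2 ⟨l, Finset.mem_toList.2 hl, rfl⟩⟩
  obtain ⟨l, hl, hLi⟩ := List.mem_map.1 (List.getElem_mem hi)
  rw [Finset.mem_toList] at hl
  have hlb : l.1 ≠ b := fun h => hbC (mem_varsClause.2 ⟨l.2, h ▸ hl⟩)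
  rw [← hLi]
  constructor
  · refine costLPR_negLit_or_neg hlb fun E hE hbE => ?_
    rcases Multiset.mem_add.1 hE with hEΓ | hEL
    · exact .inl (huniq E hEΓ hbE ▸ Finset.mem_insert_of_mem hl)
    · obtain ⟨l', -, rfl⟩ := List.mem_map.1 (List.take_subset _ _ (Multiset.mem_coe.1 hEL))
      exact .inr (by simp)
  · have hvars : varsClause {negLit l, (b, false)} = varsClause {l, (b, true)} := by
      simp [varsClause, negLit]
    rw [hvars]
    exact (Finset.image_subset_image (by simp [Finset.insert_subset_iff, hl])).trans
      (varsClause_subset_varsCNF hmem)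

/-- extension-variable lemma: if `Γ` contains a clause `C ∨ b`
where `b` is a blocking variable whose unique occurrence in `Γ` is in this
clause, then there is a cost-LPR derivation from `Γ` containing all the
clauses `¬ℓ ∨ ¬b` for the literals `ℓ` of `C` (turning `b` into an extension
variable with `b ↔ ¬C`). -/
theorem extension_variable_lemma (B : Finset Var) (Γ : CNF) (C : Clause)
    (b : Var) (hbB : b ∈ B) (hbC : b ∉ varsClause C)
    (hmem : insert ((b, true) : Lit) C ∈ Γ)
    (huniq : ∀ D ∈ Γ, b ∈ varsClause D → D = insert ((b, true) : Lit) C) :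
    ∃ L : List Clause, IsDeriv CostLPR B Γ L ∧
      ∀ l ∈ C, ({negLit l, ((b, false) : Lit)} : Clause) ∈ L :=
  extension_variable_lemma_general B Γ C b hbC hmem huniq

end PaperMaxSAT
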